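/- arXiv:1311.2081 — 3 statements merged into one kernel-verified Lean document; each statement's English description precedes it below -/
import Mathlib

section
/- Let d ≥ 1 and let σ₀, σ₁, σ∞ ∈ S_d be permutations with σ∞ σ₁ σ₀ = 1 generating a transitive subgroup of S_d. Define the excess e(σ) of a permutation σ ∈ S_d to be d minus the number of orbits of ⟨σ⟩ on {1,...,d}. Then the quantity g = 1 - d + (e(σ₀) + e(σ₁) + e(σ∞))/2 is a nonnegative integer. -/
/-!
Write `c σ` for the number of cycles of `σ` (fixed points included) and `N` for the number of
orbits of `⟨σ, τ⟩`. The genus formula amounts to `c σ + c τ + c (σ τ) + 2 g = d + 2 N` for some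
`g : ℕ`, applied to `σ = σ₁`, `τ = σ₀` (so that `σ τ = σinf⁻¹`) with `N = 1`.

The key fact is that multiplying by a transposition `(a b)` changes `c` by exactly one: it splits
the cycle through `a` and `b` if there is one, and merges the cycles of `a` and `b` otherwise. It
gives `sign σ = (-1) ^ (d + c σ)`, hence the parity, since `sign σ * sign τ * sign (σ τ) = 1`.
For the inequality `c σ + c τ + c (σ τ) ≤ d + 2 N`, induct on the support of `σ`: with `b = σ a`,
`σ' = (a b) σ` has one cycle more than `σ`, `σ τ = (a b) σ' τ` has one cycle more or less than
`σ' τ`, and `⟨σ, τ⟩`, `⟨σ', τ⟩` generate the same group together with `(a b)`, whose adjunction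
merges at most two orbits.
-/

/-- The excess of a permutation `σ` of `Fin d`: `d` minus the number of orbits
of `⟨σ⟩` on `{1, …, d}`. -/
noncomputable def permExcess (d : ℕ) (σ : Equiv.Perm (Fin d)) : ℕ :=
  d - Nat.card (Quotient (MulAction.orbitRel (Subgroup.zpowers σ) (Fin d)))

namespace Setoid

variable {α : Type*} (s : Setoid α) (a b : α)

open scoped Classical in
/-- Its kernel is `s` with the classes of `a` and `b` merged. -/
noncomputable def mergeClass (x : α) : Quotient s :=
  if s x b then ⟦a⟧ else ⟦x⟧

variable {s a b}

lemma mergeClass_of_rel {x : α} (h : s x b) : s.mergeClass a b x = ⟦a⟧ := if_pos h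

lemma mergeClass_of_not_rel {x : α} (h : ¬ s x b) : s.mergeClass a b x = ⟦x⟧ := if_neg h

lemma mergeClass_left : s.mergeClass a b a = ⟦a⟧ := by
  by_cases h : s a b
  · exact mergeClass_of_rel h
  · exact mergeClass_of_not_rel h

lemma mergeClass_right : s.mergeClass a b b = ⟦a⟧ := mergeClass_of_rel (s.refl b)

lemma mergeClass_congr {x y : α} (h : s x y) : s.mergeClass a b x = s.mergeClass a b y := by
  by_cases hx : s x b
  · rw [mergeClass_of_rel hx, mergeClass_of_rel (s.trans (s.symm h) hx)]
  · rw [mergeClass_of_not_rel hx, mergeClass_of_not_rel fun hy => hx (s.trans h hy)]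
    exact Quotient.sound h

lemma ker_mergeClass_le {r : Setoid α} (hsr : s ≤ r) (hab : r a b) :
    ker (s.mergeClass a b) ≤ r := by
  intro x y hxy
  change s.mergeClass a b x = s.mergeClass a b y at hxy
  have hb : ∀ z, s z b → r z a := fun z hz => r.trans (hsr hz) (r.symm hab)
  by_cases hx : s x b <;> by_cases hy : s y b
  · exact r.trans (hsr hx) (r.symm (hsr hy))
  · rw [mergeClass_of_rel hx, mergeClass_of_not_rel hy] at hxy
    exact r.trans (hb x hx) (hsr (Quotient.exact hxy))
  · rw [mergeClass_of_not_rel hx, mergeClass_of_rel hy] at hxy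
    exact r.trans (hsr (Quotient.exact hxy)) (r.symm (hb y hy))
  · rw [mergeClass_of_not_rel hx, mergeClass_of_not_rel hy] at hxy
    exact hsr (Quotient.exact hxy)

lemma ker_mergeClass_of_rel (h : s a b) : ker (s.mergeClass a b) = s :=
  le_antisymm (ker_mergeClass_le le_rfl h) fun _ _ hxy => mergeClass_congr hxy

lemma range_mergeClass_of_not_rel (h : ¬ s a b) :
    Set.range (s.mergeClass a b) = {⟦b⟧}ᶜ := by
  ext q
  induction q using Quotient.ind with | _ y =>
  constructor
  · rintro ⟨x, hx⟩
    by_cases hxb : s x b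
    · rw [← hx, mergeClass_of_rel hxb]
      exact fun hab => h (Quotient.exact hab)
    · rw [← hx, mergeClass_of_not_rel hxb]
      exact fun hab => hxb (Quotient.exact hab)
  · intro hy
    exact ⟨y, mergeClass_of_not_rel fun hyb => hy (Quotient.sound hyb)⟩

lemma card_quotient_ker_mergeClass_add_one [Finite α] (h : ¬ s a b) :
    Nat.card (Quotient (ker (s.mergeClass a b))) + 1 = Nat.card (Quotient s) := by
  rw [Nat.card_congr (quotientKerEquivRange _), range_mergeClass_of_not_rel h,
    Nat.card_coe_set_eq, ← Set.ncard_singleton (⟦b⟧ : Quotient s)]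
  exact Set.ncard_compl_add_ncard _

end Setoid

namespace Subgroup

variable {G : Type*} [Group G]

lemma zpowers_mul_sup_zpowers (t x : G) :
    zpowers (t * x) ⊔ zpowers t = zpowers x ⊔ zpowers t := by
  have key : ∀ u y : G, zpowers (u * y) ≤ zpowers y ⊔ zpowers u := fun u y =>
    zpowers_le.2 (mul_mem (mem_sup_right (mem_zpowers u)) (mem_sup_left (mem_zpowers y)))
  refine le_antisymm (sup_le (key t x) le_sup_right) (sup_le ?_ le_sup_right)
  simpa [zpowers_inv] using key t⁻¹ (t * x)

lemma closure_insert_mul_sup_zpowers (t x : G) (S : Set G) :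
    closure (insert (t * x) S) ⊔ zpowers t = closure (insert x S) ⊔ zpowers t := by
  have key : ∀ u y : G, closure (insert (u * y) S) ≤ closure (insert y S) ⊔ zpowers u :=
    fun u y => (closure_le _).2 <| Set.insert_subset
      (mul_mem (mem_sup_right (mem_zpowers u))
        (mem_sup_left (subset_closure (Set.mem_insert y S))))
      ((Set.subset_insert y S).trans
        (subset_closure.trans (SetLike.coe_subset_coe.2 le_sup_left)))
  refine le_antisymm (sup_le (key t x) le_sup_right) (sup_le ?_ le_sup_right)
  simpa [zpowers_inv] using key t⁻¹ (t * x)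

end Subgroup

namespace MulAction

variable {G α : Type*} [Group G] [MulAction G α]

lemma orbitRel_mono {H K : Subgroup G} (hHK : H ≤ K) : orbitRel H α ≤ orbitRel K α := by
  rintro x y ⟨⟨g, hg⟩, rfl⟩
  exact ⟨⟨g, hHK hg⟩, rfl⟩

lemma orbitRel_smul_of_mem {H : Subgroup G} {g : G} (hg : g ∈ H) (x : α) :
    orbitRel H α (g • x) x :=
  ⟨⟨g, hg⟩, rfl⟩

lemma orbitRel_closure_le_ker {β : Type*} {S : Set G} {f : α → β}
    (hS : ∀ g ∈ S, ∀ x, f (g • x) = f x) : orbitRel (Subgroup.closure S) α ≤ Setoid.ker f := by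
  suffices h : ∀ g ∈ Subgroup.closure S, ∀ x, f (g • x) = f x by
    rintro x y ⟨⟨g, hg⟩, rfl⟩
    exact h g hg y
  intro g hg
  induction hg using Subgroup.closure_induction with
  | mem g hg => exact hS g hg
  | one => simp
  | mul g h _ _ hg hh => intro x; rw [mul_smul, hg, hh]
  | inv g _ hg => intro x; rw [← hg, smul_inv_smul]

end MulAction

open Equiv Subgroup MulAction

namespace Equiv.Perm

section Orbits

variable {α : Type*}

noncomputable def numOrbits (H : Subgroup (Perm α)) : ℕ :=
  Nat.card (Quotient (orbitRel H α))

noncomputable def cycleCount (σ : Perm α) : ℕ :=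
  numOrbits (zpowers σ)

lemma orbitRel_zpowers_iff {σ : Perm α} {x y : α} :
    orbitRel (zpowers σ) α x y ↔ σ.SameCycle x y := by
  rw [orbitRel_apply, sameCycle_comm]
  constructor
  · rintro ⟨⟨g, i, rfl⟩, hg⟩
    exact ⟨i, hg⟩
  · rintro ⟨i, hi⟩
    exact ⟨⟨σ ^ i, i, rfl⟩, hi⟩

lemma orbitRel_of_sameCycle {H : Subgroup (Perm α)} {σ : Perm α} (hσ : σ ∈ H) {x y : α}
    (h : σ.SameCycle x y) : orbitRel H α x y :=
  orbitRel_mono (zpowers_le.2 hσ) (orbitRel_zpowers_iff.2 h)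

lemma numOrbits_eq_one [Nonempty α] {H : Subgroup (Perm α)}
    (h : ∀ x y : α, ∃ g ∈ H, g x = y) : numOrbits H = 1 := by
  have : IsPretransitive H α := ⟨fun x y => by
    obtain ⟨g, hg, hxy⟩ := h x y
    exact ⟨⟨g, hg⟩, hxy⟩⟩
  rw [numOrbits, Nat.card_eq_one_iff_unique]
  exact ⟨(pretransitive_iff_subsingleton_quotient H α).1 this, ⟨⟦Classical.arbitrary α⟧⟩⟩

lemma numOrbits_le_card [Finite α] (H : Subgroup (Perm α)) : numOrbits H ≤ Nat.card α :=
  Nat.card_le_card_of_surjective _ Quotient.mk_surjective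

lemma cycleCount_one : cycleCount (1 : Perm α) = Nat.card α := by
  refine Nat.card_congr (Equiv.ofBijective _ ⟨?_, Quotient.mk_surjective⟩).symm
  intro x y hxy
  obtain ⟨i, hi⟩ := orbitRel_zpowers_iff.1 (Quotient.exact hxy)
  simpa using hi

lemma not_sameCycle_of_pow_apply_eq_self [Finite α] {f : Perm α} {x y : α} {k : ℕ}
    (hk : 0 < k) (hfx : (f ^ k) x = x) (hy : ∀ j < k, (f ^ j) x ≠ y) : ¬ f.SameCycle x y := by
  intro hxy
  obtain ⟨i, rfl⟩ := hxy.exists_nat_pow_eq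
  refine hy (i % k) (Nat.mod_lt i hk) ?_
  conv_rhs => rw [← Nat.mod_add_div i k, pow_add, pow_mul, mul_apply,
    pow_apply_eq_self_of_apply_eq_self hfx]

end Orbits

section Swap

variable {α : Type*} [DecidableEq α]

lemma orbitRel_sup_zpowers_swap (H : Subgroup (Perm α)) (a b : α) :
    orbitRel ↥(H ⊔ zpowers (swap a b)) α = Setoid.ker ((orbitRel H α).mergeClass a b) := by
  have hab : orbitRel ↥(H ⊔ zpowers (swap a b)) α a b := by
    simpa using orbitRel_smul_of_mem (mem_sup_right (mem_zpowers (swap a b)) : _ ∈ H ⊔ _) b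
  refine le_antisymm ?_ (Setoid.ker_mergeClass_le (orbitRel_mono le_sup_left) hab)
  have hK : H ⊔ zpowers (swap a b) = closure (H ∪ {swap a b}) := by
    rw [zpowers_eq_closure, Subgroup.closure_union, closure_eq]
  rw [hK]
  refine orbitRel_closure_le_ker ?_
  rintro g (hg | rfl)
  · exact fun x => Setoid.mergeClass_congr (orbitRel_smul_of_mem hg x)
  · intro x
    rw [Perm.smul_def]
    rcases eq_or_ne x a with rfl | hxa
    · rw [swap_apply_left, Setoid.mergeClass_left, Setoid.mergeClass_right]
    rcases eq_or_ne x b with rfl | hxb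
    · rw [swap_apply_right, Setoid.mergeClass_left, Setoid.mergeClass_right]
    · rw [swap_apply_of_ne_of_ne hxa hxb]

lemma numOrbits_sup_zpowers_swap_of_rel {H : Subgroup (Perm α)} {a b : α}
    (h : orbitRel H α a b) : numOrbits (H ⊔ zpowers (swap a b)) = numOrbits H := by
  rw [numOrbits, orbitRel_sup_zpowers_swap, Setoid.ker_mergeClass_of_rel h, numOrbits]

lemma numOrbits_sup_zpowers_swap_add_one [Finite α] {H : Subgroup (Perm α)} {a b : α}
    (h : ¬ orbitRel H α a b) : numOrbits (H ⊔ zpowers (swap a b)) + 1 = numOrbits H := by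
  rw [numOrbits, orbitRel_sup_zpowers_swap]
  exact Setoid.card_quotient_ker_mergeClass_add_one h

lemma numOrbits_le_numOrbits_sup_zpowers_swap_add_one [Finite α] (H : Subgroup (Perm α))
    (a b : α) :
    numOrbits H ≤ numOrbits (H ⊔ zpowers (swap a b)) + 1 := by
  by_cases h : orbitRel H α a b
  · rw [numOrbits_sup_zpowers_swap_of_rel h]; omega
  · rw [numOrbits_sup_zpowers_swap_add_one h]

variable {ρ : Perm α} {a b : α}

lemma swap_mul_pow_succ_apply {n : ℕ}
    (h : ∀ j, 0 < j → j ≤ n → (ρ ^ j) a ≠ a ∧ (ρ ^ j) a ≠ b) :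
    ((swap a b * ρ) ^ (n + 1)) a = swap a b ((ρ ^ (n + 1)) a) := by
  induction n with
  | zero => simp
  | succ n ih =>
    obtain ⟨hna, hnb⟩ := h (n + 1) n.succ_pos le_rfl
    rw [pow_succ', mul_apply, ih fun j hj hjn => h j hj (hjn.trans n.le_succ),
      swap_apply_of_ne_of_ne hna hnb, mul_apply, ← mul_apply ρ, ← pow_succ']

theorem sameCycle_swap_mul_iff [Finite α] (hab : a ≠ b) :
    (swap a b * ρ).SameCycle a b ↔ ¬ ρ.SameCycle a b := by
  classical
  -- `n + 1` is the first time the `ρ`-orbit of `a` returns to `{a, b}`; until then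
  -- `swap a b * ρ` moves `a` like `ρ` does, and at that time it lands on the other point.
  have hex : ∃ k, 0 < k ∧ ((ρ ^ k) a = a ∨ (ρ ^ k) a = b) :=
    ⟨orderOf ρ, orderOf_pos ρ, Or.inl (by rw [pow_orderOf_eq_one, one_apply])⟩
  obtain ⟨n, hn⟩ : ∃ n, Nat.find hex = n + 1 :=
    Nat.exists_eq_add_one_of_ne_zero (Nat.find_spec hex).1.ne'
  have hret := (Nat.find_spec hex).2
  have hfirst : ∀ j, 0 < j → j ≤ n → (ρ ^ j) a ≠ a ∧ (ρ ^ j) a ≠ b := fun j hj hjn => by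
    simpa [hj] using Nat.find_min hex (by omega : j < Nat.find hex)
  rw [hn] at hret
  have hρ : ∀ j < n + 1, (ρ ^ j) a ≠ b
    | 0, _ => hab
    | m + 1, hm => (hfirst (m + 1) m.succ_pos (by omega)).2
  have hσ : ∀ j < n + 1, ((swap a b * ρ) ^ j) a ≠ b
    | 0, _ => hab
    | m + 1, hm => by
      obtain ⟨hma, hmb⟩ := hfirst (m + 1) m.succ_pos (by omega)
      rwa [swap_mul_pow_succ_apply fun i hi him => hfirst i hi (by omega),
        swap_apply_of_ne_of_ne hma hmb]
  have hσn := swap_mul_pow_succ_apply hfirst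
  rcases hret with hret | hret
  · rw [hret, swap_apply_left] at hσn
    exact iff_of_true ⟨(n + 1 : ℕ), by rw [zpow_natCast, hσn]⟩
      (not_sameCycle_of_pow_apply_eq_self n.succ_pos hret hρ)
  · rw [hret, swap_apply_right] at hσn
    exact iff_of_false (not_sameCycle_of_pow_apply_eq_self n.succ_pos hσn hσ)
      (not_not.2 ⟨(n + 1 : ℕ), by rw [zpow_natCast, hret]⟩)

lemma cycleCount_swap_mul_of_sameCycle [Finite α] (hab : a ≠ b) (h : ρ.SameCycle a b) :
    cycleCount (swap a b * ρ) = cycleCount ρ + 1 := by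
  have hsplit : ¬ orbitRel (zpowers (swap a b * ρ)) α a b := fun h' =>
    (sameCycle_swap_mul_iff hab).1 (orbitRel_zpowers_iff.1 h') h
  rw [cycleCount, cycleCount, ← numOrbits_sup_zpowers_swap_add_one hsplit,
    zpowers_mul_sup_zpowers, numOrbits_sup_zpowers_swap_of_rel (orbitRel_zpowers_iff.2 h)]

lemma cycleCount_swap_mul_of_not_sameCycle [Finite α] (hab : a ≠ b) (h : ¬ ρ.SameCycle a b) :
    cycleCount ρ = cycleCount (swap a b * ρ) + 1 := by
  simpa using cycleCount_swap_mul_of_sameCycle hab ((sameCycle_swap_mul_iff hab).2 h)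

end Swap

section Genus

variable {α : Type*} [Fintype α] [DecidableEq α]

theorem sign_eq_neg_one_pow_card_add_cycleCount (σ : Perm α) :
    sign σ = (-1) ^ (Nat.card α + cycleCount σ) := by
  induction σ using swap_induction_on with
  | one => rw [sign_one, cycleCount_one, ← two_mul, pow_mul, neg_one_sq, one_pow]
  | swap_mul f x y hxy ih =>
    rw [sign_mul, sign_swap hxy, ih]
    by_cases h : f.SameCycle x y
    · rw [cycleCount_swap_mul_of_sameCycle hxy h, ← add_assoc, pow_succ, mul_comm]
    · rw [cycleCount_swap_mul_of_not_sameCycle hxy h, ← add_assoc, pow_succ,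
        mul_neg_one, neg_one_mul, neg_neg]

theorem even_cycleCount_add_cycleCount_add_cycleCount_mul_add_card (σ τ : Perm α) :
    Even (cycleCount σ + cycleCount τ + cycleCount (σ * τ) + Nat.card α) := by
  have h : (-1 : ℤˣ) ^ (cycleCount σ + cycleCount τ + cycleCount (σ * τ) + Nat.card α
      + 2 * Nat.card α) = 1 := by
    calc _ = sign σ * sign τ * sign (σ * τ) := by
          simp only [sign_eq_neg_one_pow_card_add_cycleCount, ← pow_add]; ring_nf
      _ = 1 := by rw [sign_mul, Int.units_mul_self]
  have := (neg_one_pow_eq_one_iff_even (by decide)).1 h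
  exact (Nat.even_add.1 this).2 (even_two_mul _)

theorem cycleCount_add_cycleCount_add_cycleCount_mul_le (σ τ : Perm α) :
    cycleCount σ + cycleCount τ + cycleCount (σ * τ) ≤
      Nat.card α + 2 * numOrbits (closure {σ, τ}) := by
  induction hn : σ.support.card using Nat.strong_induction_on generalizing σ with
  | _ n ih =>
  by_cases hσ : σ = 1
  · subst hσ
    rw [one_mul, cycleCount_one, closure_insert_one, ← zpowers_eq_closure, ← cycleCount]
    omega
  obtain ⟨a, ha⟩ : ∃ a, σ a ≠ a := not_forall.1 fun h => hσ (Equiv.ext h)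
  set b := σ a
  have hab : a ≠ b := ha.symm
  set σ' := swap a b * σ
  have hσ' : swap a b * σ' = σ := swap_mul_self_mul a b σ
  have hστ : swap a b * (σ' * τ) = σ * τ := by rw [← mul_assoc, hσ']
  have hIH := ih _ (hn ▸ card_support_swap_mul ha) σ' rfl
  have hcyc : cycleCount σ' = cycleCount σ + 1 :=
    cycleCount_swap_mul_of_sameCycle hab ⟨1, rfl⟩
  have hσab : orbitRel (closure {σ, τ}) α a b :=
    (orbitRel _ α).symm (orbitRel_smul_of_mem (subset_closure (Set.mem_insert σ _)) a)
  have hN : numOrbits (closure {σ', τ} ⊔ zpowers (swap a b)) = numOrbits (closure {σ, τ}) := by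
    rw [closure_insert_mul_sup_zpowers, numOrbits_sup_zpowers_swap_of_rel hσab]
  by_cases hρ : (σ' * τ).SameCycle a b
  · have hρ' :
        numOrbits (closure {σ', τ} ⊔ zpowers (swap a b)) = numOrbits (closure {σ', τ}) :=
      numOrbits_sup_zpowers_swap_of_rel (orbitRel_of_sameCycle
        (mul_mem (subset_closure (Set.mem_insert σ' _)) (subset_closure (by simp))) hρ)
    have := cycleCount_swap_mul_of_sameCycle hab hρ
    rw [hστ] at this
    omega
  · have := cycleCount_swap_mul_of_not_sameCycle hab hρ
    have := numOrbits_le_numOrbits_sup_zpowers_swap_add_one (closure {σ', τ}) a b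
    rw [hστ] at *
    omega

theorem exists_cycleCount_add_two_mul_eq (σ τ : Perm α) :
    ∃ g : ℕ, cycleCount σ + cycleCount τ + cycleCount (σ * τ) + 2 * g =
      Nat.card α + 2 * numOrbits (closure {σ, τ}) := by
  obtain ⟨k, hk⟩ := even_cycleCount_add_cycleCount_add_cycleCount_mul_add_card σ τ
  have := cycleCount_add_cycleCount_add_cycleCount_mul_le σ τ
  exact ⟨Nat.card α + numOrbits (closure {σ, τ}) - k, by omega⟩

end Genus

end Equiv.Perm

lemma cast_permExcess {d : ℕ} (σ : Equiv.Perm (Fin d)) :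
    (permExcess d σ : ℚ) = d - Equiv.Perm.cycleCount σ := by
  have := Equiv.Perm.numOrbits_le_card (zpowers σ)
  rw [Nat.card_eq_fintype_card, Fintype.card_fin] at this
  exact Nat.cast_sub this

open Equiv.Perm

/-- Riemann–Hurwitz: for a transitive permutation triple of degree `d`, the genus
`g = 1 - d + (e(σ₀) + e(σ₁) + e(σinf))/2` is a nonnegative integer. -/
theorem genus_of_transitive_triple (d : ℕ) (hd : 1 ≤ d)
    (σ₀ σ₁ σinf : Equiv.Perm (Fin d)) (hprod : σinf * σ₁ * σ₀ = 1)
    (htrans : ∀ i j : Fin d, ∃ g ∈ Subgroup.closure {σ₀, σ₁, σinf}, g i = j) :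
    ∃ g : ℕ, (g : ℚ) =
      1 - d + ((permExcess d σ₀ + permExcess d σ₁ + permExcess d σinf : ℕ) : ℚ) / 2 := by
  have hinf : σinf = (σ₁ * σ₀)⁻¹ := eq_inv_of_mul_eq_one_left (by rwa [← mul_assoc])
  have hcinf : cycleCount σinf = cycleCount (σ₁ * σ₀) := by
    rw [hinf, cycleCount, zpowers_inv, cycleCount]
  have : Nonempty (Fin d) := ⟨⟨0, hd⟩⟩
  have hconn : numOrbits (closure {σ₁, σ₀}) = 1 := by
    refine numOrbits_eq_one fun i j => ?_
    obtain ⟨g, hg, hgij⟩ := htrans i j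
    refine ⟨g, (closure_le _).2 ?_ hg, hgij⟩
    rintro _ (rfl | rfl | rfl)
    · exact subset_closure (by simp)
    · exact subset_closure (by simp)
    · rw [hinf]
      exact inv_mem (mul_mem (subset_closure (by simp)) (subset_closure (by simp)))
  obtain ⟨g, hg⟩ := exists_cycleCount_add_two_mul_eq σ₁ σ₀
  rw [hconn, ← hcinf, Nat.card_eq_fintype_card, Fintype.card_fin] at hg
  refine ⟨g, ?_⟩
  have hgQ : (cycleCount σ₁ + cycleCount σ₀ + cycleCount σinf + 2 * g : ℚ) = d + 2 := by
    exact_mod_cast hg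
  push_cast [cast_permExcess]
  linarith
end

section
/- For real numbers A, B, C with C - A - B > 0 and C not a nonpositive integer, the hypergeometric series F(A,B,C;t) = Σ_{n≥0} (A)_n (B)_n / ((C)_n n!) t^n converges at t = 1 and F(A,B,C;1) = Γ(C)Γ(C-A-B)/(Γ(C-A)Γ(C-B)). -/
/-!
Write `tₙ(C) = (A)ₙ(B)ₙ / ((C)ₙ n!)` and `F(C) = ∑ tₙ(C)`. Euler's limit
`Γ(x) = lim nˣ n! / (x)ₙ₊₁` shows `tₙ₊₁(C) ~ Γ(C)/(Γ(A)Γ(B)) · n^(A+B-C-1)`, so the series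
converges and `n tₙ(C) → 0`. Telescoping then gives the contiguous relation
`C (C-A-B) F(C) = (C-A)(C-B) F(C+1)`, and iterating it,
`F(C) = (C-A)ₘ(C-B)ₘ / ((C)ₘ(C-A-B)ₘ) · F(C+m)`. As `m → ∞`, `F(C+m) → 1` by dominated
convergence and the Pochhammer quotient tends to `Γ(C)Γ(C-A-B)/(Γ(C-A)Γ(C-B))`, again by
Euler's limit.
-/

open Polynomial Filter Finset Topology
open scoped Nat

theorem ascPochhammer_eval_eq_prod_range {R : Type*} [CommSemiring R] (x : R) (n : ℕ) :
    (ascPochhammer R n).eval x = ∏ i ∈ range n, (x + i) := by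
  induction n with
  | zero => simp
  | succ n ih => rw [ascPochhammer_succ_eval, ih, prod_range_succ]

theorem ascPochhammer_eval_add_one_mul {R : Type*} [CommSemiring R] (x : R) (n : ℕ) :
    x * (ascPochhammer R n).eval (x + 1) = (ascPochhammer R n).eval x * (x + n) := by
  rw [← ascPochhammer_succ_eval, ascPochhammer_succ_left]
  simp [eval_comp]

theorem ascPochhammer_eval_ne_zero {R : Type*} [CommRing R] [IsDomain R] {x : R}
    (hx : ∀ k : ℕ, x ≠ -k) (n : ℕ) : (ascPochhammer R n).eval x ≠ 0 := by
  rw [ne_eq, ascPochhammer_eval_eq_zero_iff]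
  rintro ⟨k, -, hk⟩
  exact hx k (by rw [hk, neg_neg])

section OrderedRing

variable {R : Type*} [CommRing R] [LinearOrder R] [IsStrictOrderedRing R]

theorem abs_ascPochhammer_eval_le (x : R) (n : ℕ) :
    |(ascPochhammer R n).eval x| ≤ (ascPochhammer R n).eval |x| := by
  rw [ascPochhammer_eval_eq_prod_range, ascPochhammer_eval_eq_prod_range, abs_prod]
  gcongr with i
  exact (abs_add_le _ _).trans_eq (by rw [Nat.abs_cast])

theorem ascPochhammer_eval_le_of_le {x y : R} (hx : 0 ≤ x) (hxy : x ≤ y) (n : ℕ) :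
    (ascPochhammer R n).eval x ≤ (ascPochhammer R n).eval y := by
  rw [ascPochhammer_eval_eq_prod_range, ascPochhammer_eval_eq_prod_range]
  exact prod_le_prod (fun i _ => by positivity) fun i _ => by linarith

end OrderedRing

theorem tendsto_ascPochhammer_eval_atTop {𝕜 : Type*} [NormedField 𝕜] [LinearOrder 𝕜]
    [IsStrictOrderedRing 𝕜] [OrderTopology 𝕜] {n : ℕ} (hn : n ≠ 0) :
    Tendsto (fun x : 𝕜 => (ascPochhammer 𝕜 n).eval x) atTop atTop := by
  refine tendsto_atTop_of_leadingCoeff_nonneg _ ?_ ?_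
  · rw [← natDegree_pos_iff_degree_pos, ascPochhammer_natDegree]
    exact Nat.pos_of_ne_zero hn
  · rw [(monic_ascPochhammer 𝕜 n).leadingCoeff]
    exact zero_le_one

theorem hasSum_sub_add_one_of_tendsto {G : Type*} [AddCommGroup G] [TopologicalSpace G]
    [IsTopologicalAddGroup G] [T2Space G] {f : ℕ → G} {l : G}
    (hs : Summable fun n => f n - f (n + 1)) (hf : Tendsto f atTop (𝓝 l)) :
    HasSum (fun n => f n - f (n + 1)) (f 0 - l) := by
  rw [hs.hasSum_iff_tendsto_nat]
  simp only [sum_range_sub']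
  exact tendsto_const_nhds.sub hf

namespace Real

theorem inv_GammaSeq (x : ℝ) (n : ℕ) :
    (GammaSeq x n)⁻¹ = (ascPochhammer ℝ (n + 1)).eval x / ((n : ℝ) ^ x * n !) := by
  rw [GammaSeq, inv_div, ascPochhammer_eval_eq_prod_range]

/- This holds at the poles `x = -k` too, where both sides are eventually `0` since
`Gamma (-k) = 0` and `0⁻¹ = 0`; so no case split on `C - A` or `C - B` being a pole is needed. -/
theorem tendsto_inv_GammaSeq (x : ℝ) :
    Tendsto (fun n => (GammaSeq x n)⁻¹) atTop (𝓝 (Gamma x)⁻¹) := by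
  by_cases hx : ∀ k : ℕ, x ≠ -k
  · exact (GammaSeq_tendsto_Gamma x).inv₀ (Gamma_ne_zero hx)
  push Not at hx
  obtain ⟨k, rfl⟩ := hx
  rw [Gamma_neg_nat_eq_zero, inv_zero]
  refine tendsto_const_nhds.congr' ?_
  filter_upwards [eventually_ge_atTop k] with n hn
  rw [inv_GammaSeq, ascPochhammer_eval_neg_coe_nat_of_lt (by omega), zero_div]

theorem tendsto_inv_GammaSeq_mul_inv_GammaSeq_mul_GammaSeq (A B C : ℝ) :
    Tendsto (fun n => (GammaSeq A n)⁻¹ * (GammaSeq B n)⁻¹ * GammaSeq C n) atTop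
      (𝓝 ((Gamma A)⁻¹ * (Gamma B)⁻¹ * Gamma C)) :=
  ((tendsto_inv_GammaSeq A).mul (tendsto_inv_GammaSeq B)).mul (GammaSeq_tendsto_Gamma C)

end Real

noncomputable def gaussHGCoeff (A B C : ℝ) (n : ℕ) : ℝ :=
  (ascPochhammer ℝ n).eval A * (ascPochhammer ℝ n).eval B /
    ((ascPochhammer ℝ n).eval C * (n ! : ℝ))

section GaussHGCoeff

open Real

variable {A B C : ℝ}

@[simp]
theorem gaussHGCoeff_zero (A B C : ℝ) : gaussHGCoeff A B C 0 = 1 := by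
  simp [gaussHGCoeff]

theorem gaussHGCoeff_succ_eq_GammaSeq (A B C : ℝ) {n : ℕ} (hn : n ≠ 0) :
    gaussHGCoeff A B C (n + 1) =
      (GammaSeq A n)⁻¹ * (GammaSeq B n)⁻¹ * GammaSeq C n * (n : ℝ) ^ (A + B - C) / (n + 1) := by
  have hn' : (0 : ℝ) < n := by positivity
  rw [← inv_inv (GammaSeq C n), inv_GammaSeq, inv_GammaSeq, inv_GammaSeq, rpow_sub hn',
    rpow_add hn', gaussHGCoeff, Nat.factorial_succ]
  push_cast
  field_simp

theorem tendsto_natCast_mul_gaussHGCoeff (h : 0 < C - A - B) :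
    Tendsto (fun n : ℕ => n * gaussHGCoeff A B C n) atTop (𝓝 0) := by
  rw [← tendsto_add_atTop_iff_nat 1]
  have hpow : Tendsto (fun n : ℕ => (n : ℝ) ^ (A + B - C)) atTop (𝓝 0) := by
    rw [show A + B - C = -(C - A - B) by ring]
    exact (tendsto_rpow_neg_atTop h).comp tendsto_natCast_atTop_atTop
  have hlim := (tendsto_inv_GammaSeq_mul_inv_GammaSeq_mul_GammaSeq A B C).mul hpow
  rw [mul_zero] at hlim
  refine hlim.congr' ?_
  filter_upwards [eventually_ne_atTop 0] with n hn
  rw [gaussHGCoeff_succ_eq_GammaSeq A B C hn]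
  push_cast
  field_simp

theorem summable_gaussHGCoeff (h : 0 < C - A - B) : Summable (gaussHGCoeff A B C) := by
  rw [← summable_nat_add_iff 1]
  refine summable_of_isBigO_nat (g := fun n : ℕ => (n : ℝ) ^ (A + B - C - 1))
    (summable_nat_rpow.2 (by linarith)) ?_
  have hdecay : (fun n : ℕ => (n : ℝ) ^ (A + B - C) / (n + 1)) =O[atTop]
      fun n : ℕ => (n : ℝ) ^ (A + B - C - 1) := by
    refine Asymptotics.IsBigO.of_bound 1 ?_
    filter_upwards [eventually_ne_atTop 0] with n hn
    have hn' : (0 : ℝ) < n := by positivity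
    rw [rpow_sub_one hn'.ne', norm_of_nonneg (by positivity), norm_of_nonneg (by positivity),
      one_mul]
    gcongr
    linarith
  have hbigO :=
    (tendsto_inv_GammaSeq_mul_inv_GammaSeq_mul_GammaSeq A B C).isBigO_one ℝ |>.mul hdecay
  simp only [one_mul] at hbigO
  refine hbigO.congr' ?_ EventuallyEq.rfl
  filter_upwards [eventually_ne_atTop 0] with n hn
  rw [gaussHGCoeff_succ_eq_GammaSeq A B C hn, mul_div_assoc]

theorem gaussHGCoeff_contiguous (hC : ∀ k : ℕ, C ≠ -k) (n : ℕ) :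
    C * (C - A - B) * gaussHGCoeff A B C n - (C - A) * (C - B) * gaussHGCoeff A B (C + 1) n =
      C * n * gaussHGCoeff A B C n - C * (n + 1 : ℕ) * gaussHGCoeff A B C (n + 1) := by
  have hC0 : C ≠ 0 := by simpa using hC 0
  have hCn : C + n ≠ 0 := fun h => hC n (by linarith)
  have hPC : (ascPochhammer ℝ n).eval C ≠ 0 := ascPochhammer_eval_ne_zero hC n
  have hshift : (ascPochhammer ℝ n).eval (C + 1) = (ascPochhammer ℝ n).eval C * (C + n) / C := by
    rw [← ascPochhammer_eval_add_one_mul, mul_div_cancel_left₀ _ hC0]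
  simp only [gaussHGCoeff, ascPochhammer_succ_eval, Nat.factorial_succ, hshift]
  push_cast
  field_simp
  ring

theorem mul_tsum_gaussHGCoeff_eq_mul_tsum_add_one (hC : ∀ k : ℕ, C ≠ -k) (h : 0 < C - A - B) :
    C * (C - A - B) * ∑' n, gaussHGCoeff A B C n =
      (C - A) * (C - B) * ∑' n, gaussHGCoeff A B (C + 1) n := by
  set g : ℕ → ℝ := fun n => C * n * gaussHGCoeff A B C n
  have hS := ((summable_gaussHGCoeff h).hasSum.mul_left (C * (C - A - B))).sub
    ((summable_gaussHGCoeff (A := A) (B := B) (C := C + 1) (by linarith)).hasSum.mul_left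
      ((C - A) * (C - B)))
  simp only [gaussHGCoeff_contiguous hC] at hS
  have hg : Tendsto g atTop (𝓝 0) := by
    simpa [g, mul_assoc] using (tendsto_natCast_mul_gaussHGCoeff h).const_mul C
  have htelescope := hasSum_sub_add_one_of_tendsto hS.summable hg
  simp only [Nat.cast_zero, mul_zero, zero_mul, sub_zero] at htelescope
  exact sub_eq_zero.1 (hS.unique htelescope)

theorem ascPochhammer_mul_tsum_gaussHGCoeff (hC : ∀ k : ℕ, C ≠ -k) (h : 0 < C - A - B) (m : ℕ) :
    (ascPochhammer ℝ m).eval C * (ascPochhammer ℝ m).eval (C - A - B) *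
        ∑' n, gaussHGCoeff A B C n =
      (ascPochhammer ℝ m).eval (C - A) * (ascPochhammer ℝ m).eval (C - B) *
        ∑' n, gaussHGCoeff A B (C + m) n := by
  induction m with
  | zero => simp
  | succ m ih =>
    have hCm : ∀ k : ℕ, C + m ≠ -k := fun k hk => hC (m + k) (by push_cast; linarith)
    have step := mul_tsum_gaussHGCoeff_eq_mul_tsum_add_one (A := A) (B := B) hCm
      (by have : (0 : ℝ) ≤ m := m.cast_nonneg; linarith)
    simp only [ascPochhammer_succ_eval, Nat.cast_succ, ← add_assoc]
    linear_combination (C + m) * (C - A - B + m) * ih +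
      (ascPochhammer ℝ m).eval (C - A) * (ascPochhammer ℝ m).eval (C - B) * step

theorem abs_gaussHGCoeff_le {x y : ℝ} (hy : 0 < y) (hyx : y ≤ x) (n : ℕ) :
    |gaussHGCoeff A B x n| ≤ gaussHGCoeff |A| |B| y n := by
  have hPy : 0 < (ascPochhammer ℝ n).eval y := ascPochhammer_pos n y hy
  have hPA := (abs_nonneg _).trans (abs_ascPochhammer_eval_le A n)
  have hPB := (abs_nonneg _).trans (abs_ascPochhammer_eval_le B n)
  rw [gaussHGCoeff, gaussHGCoeff, abs_div, abs_mul, abs_mul, Nat.abs_cast,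
    abs_of_pos (ascPochhammer_pos n x (hy.trans_le hyx))]
  gcongr
  exacts [abs_ascPochhammer_eval_le A n, abs_ascPochhammer_eval_le B n,
    ascPochhammer_eval_le_of_le hy.le hyx n]

theorem tendsto_gaussHGCoeff_atTop (A B : ℝ) {n : ℕ} (hn : n ≠ 0) :
    Tendsto (fun x => gaussHGCoeff A B x n) atTop (𝓝 0) :=
  tendsto_const_nhds.div_atTop
    ((tendsto_ascPochhammer_eval_atTop hn).atTop_mul_const (by positivity))

theorem tendsto_tsum_gaussHGCoeff_atTop (A B : ℝ) :
    Tendsto (fun x => ∑' n, gaussHGCoeff A B x n) atTop (𝓝 1) := by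
  set y := |A| + |B| + 1
  have hy : 0 < y := by positivity
  have hlim : ∀ n, Tendsto (fun x => gaussHGCoeff A B x n) atTop
      (𝓝 (if n = 0 then 1 else 0)) := by
    intro n
    split_ifs with hn
    · simp [hn]
    · exact tendsto_gaussHGCoeff_atTop A B hn
  have hdom := tendsto_tsum_of_dominated_convergence
    (summable_gaussHGCoeff (A := |A|) (B := |B|) (C := y) (by linarith)) hlim
    (eventually_ge_atTop y |>.mono fun x hx n => abs_gaussHGCoeff_le hy hx n)
  rwa [tsum_ite_eq] at hdom

theorem tsum_gaussHGCoeff_eq_GammaSeq_mul (hC : ∀ k : ℕ, C ≠ -k) (h : 0 < C - A - B)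
    {m : ℕ} (hm : m ≠ 0) :
    ∑' n, gaussHGCoeff A B C n =
      GammaSeq C m * GammaSeq (C - A - B) m * (GammaSeq (C - A) m)⁻¹ * (GammaSeq (C - B) m)⁻¹ *
        ∑' n, gaussHGCoeff A B (C + (m + 1 : ℕ)) n := by
  have hD : ∀ k : ℕ, C - A - B ≠ -k := fun k hk => by linarith [k.cast_nonneg (α := ℝ)]
  have hPC := ascPochhammer_eval_ne_zero hC (m + 1)
  have hPD := ascPochhammer_eval_ne_zero hD (m + 1)
  have hm' : (0 : ℝ) < m := by positivity
  have hpow : (m : ℝ) ^ C * (m : ℝ) ^ (C - A - B) = (m : ℝ) ^ (C - A) * (m : ℝ) ^ (C - B) := by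
    rw [← rpow_add hm', ← rpow_add hm']
    ring_nf
  rw [← inv_inv (GammaSeq C m), ← inv_inv (GammaSeq (C - A - B) m), inv_GammaSeq, inv_GammaSeq,
    inv_GammaSeq, inv_GammaSeq]
  field_simp
  rw [hpow]
  linear_combination (m : ℝ) ^ (C - A) * (m : ℝ) ^ (C - B) *
    ascPochhammer_mul_tsum_gaussHGCoeff (A := A) (B := B) hC h (m + 1)

end GaussHGCoeff

/-- Gauss's summation theorem: for real `A`, `B`, `C` with `C - A - B > 0` and `C`
not a nonpositive integer, the hypergeometric series converges at `t = 1` with sum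
`Γ(C)Γ(C-A-B)/(Γ(C-A)Γ(C-B))`. -/
theorem gauss_summation (A B C : ℝ) (h : 0 < C - A - B)
    (hC : ∀ n : ℕ, C ≠ -(n : ℝ)) :
    HasSum
      (fun n : ℕ =>
        (ascPochhammer ℝ n).eval A * (ascPochhammer ℝ n).eval B /
          ((ascPochhammer ℝ n).eval C * (n.factorial : ℝ)))
      (Real.Gamma C * Real.Gamma (C - A - B) /
        (Real.Gamma (C - A) * Real.Gamma (C - B))) := by
  have hshift : Tendsto (fun m : ℕ => C + (m + 1 : ℕ)) atTop atTop :=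
    tendsto_atTop_add_const_left _ C (tendsto_natCast_atTop_atTop.comp (tendsto_add_atTop_nat 1))
  have hlim := ((((Real.GammaSeq_tendsto_Gamma C).mul
    (Real.GammaSeq_tendsto_Gamma (C - A - B))).mul (Real.tendsto_inv_GammaSeq (C - A))).mul
      (Real.tendsto_inv_GammaSeq (C - B))).mul
    ((tendsto_tsum_gaussHGCoeff_atTop A B).comp hshift)
  rw [mul_one, mul_assoc _ (Real.Gamma (C - A))⁻¹, ← mul_inv, ← div_eq_mul_inv] at hlim
  have hsum := tendsto_nhds_unique (tendsto_const_nhds.congr' <|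
    (eventually_ne_atTop 0).mono fun m hm => tsum_gaussHGCoeff_eq_GammaSeq_mul hC h hm) hlim
  exact hsum ▸ (summable_gaussHGCoeff h).hasSum
end

section
/- For real numbers A, B, C with C not a nonpositive integer, the function y(t) = Σ_{n≥0} (A)_n (B)_n / ((C)_n n!) t^n satisfies the hypergeometric differential equation t(1-t)y'' + (C - (A+B+1)t)y' - AB·y = 0 on the open unit disc. -/
/-!
Inside its disc of convergence a power series `y = ∑ cₙ tⁿ` can be differentiated termwise.
Hence `t y'' + γ y'` is the power series with coefficients `(n + 1)(n + γ) cₙ₊₁`, while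
`t (t y'' + (α + β + 1) y') + α β y` has coefficients `(n + α)(n + β) cₙ`. For the hypergeometric
coefficients `cₙ = (α)ₙ (β)ₙ / ((γ)ₙ n!)` these agree, and their difference is the hypergeometric
operator applied to `y`. The hypergeometric series has radius of convergence at least `1`
(exactly `1` unless it terminates).
-/

open Filter Metric FormalMultilinearSeries
open scoped Topology

def derivCoeff {R : Type*} [Semiring R] (c : ℕ → R) (n : ℕ) : R := (n + 1) • c (n + 1)

section NormedField

variable {𝕜 : Type*} [NontriviallyNormedField 𝕜]

theorem radius_ofScalars_le_radius_ofScalars_derivCoeff (c : ℕ → 𝕜) :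
    (ofScalars 𝕜 c).radius ≤ (ofScalars 𝕜 (derivCoeff c)).radius := by
  refine ENNReal.le_of_forall_nnreal_lt fun r hr => ?_
  rcases eq_or_ne r 0 with rfl | hr0
  · exact bot_le
  have hr0' : (0 : ℝ) < r := by positivity
  obtain ⟨a, ha, K, -, hK⟩ := (ofScalars 𝕜 c).norm_mul_pow_le_mul_pow_of_lt_radius hr
  have hgeom : Summable fun n : ℕ => ((n + 1 : ℕ) : ℝ) ^ 1 * a ^ (n + 1) :=
    (summable_nat_add_iff (f := fun n : ℕ => (n : ℝ) ^ 1 * a ^ n) 1).2 <|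
      summable_pow_mul_geometric_of_norm_lt_one 1 <| by
        rw [Real.norm_of_nonneg ha.1.le]; exact ha.2
  refine le_radius_of_summable_norm _ <| .of_nonneg_of_le (fun _ => by positivity) (fun n => ?_)
    (hgeom.mul_left (K / r))
  have hn := hK (n + 1)
  rw [ofScalars_norm] at hn ⊢
  calc ‖derivCoeff c n‖ * r ^ n ≤ (n + 1) * ‖c (n + 1)‖ * r ^ n := by
        gcongr
        exact_mod_cast norm_nsmul_le (n := n + 1) (a := c (n + 1))
    _ = (n + 1) * (‖c (n + 1)‖ * r ^ (n + 1)) / r := by field_simp; ring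
    _ ≤ (n + 1) * (K * a ^ (n + 1)) / r := by gcongr
    _ = K / r * (((n + 1 : ℕ) : ℝ) ^ 1 * a ^ (n + 1)) := by push_cast; ring

theorem hasSum_ofScalars [CompleteSpace 𝕜] {c : ℕ → 𝕜} {z : 𝕜}
    (hz : z ∈ eball 0 (ofScalars 𝕜 c).radius) :
    HasSum (fun n => c n * z ^ n) (ofScalarsSum c z) := by
  unfold ofScalarsSum
  simpa only [ofScalars_apply_eq, smul_eq_mul] using (ofScalars 𝕜 c).hasSum hz

theorem HasSum.natCast_mul_of_derivCoeff {c : ℕ → 𝕜} {z s : 𝕜}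
    (h : HasSum (fun n => derivCoeff c n * z ^ n) s) :
    HasSum (fun n => n * c n * z ^ n) (z * s) := by
  refine (hasSum_nat_add_iff' 1).1 ?_
  simpa [derivCoeff, pow_succ, mul_assoc, mul_comm, mul_left_comm] using h.mul_left z

end NormedField

theorem deriv_ofScalarsSum {c : ℕ → ℂ} {z : ℂ} (hz : z ∈ eball 0 (ofScalars ℂ c).radius) :
    deriv (ofScalarsSum c) z = ofScalarsSum (derivCoeff c) z := by
  obtain ⟨r, hzr, hr⟩ := ENNReal.lt_iff_exists_nnreal_btwn.1 (mem_eball_zero_iff.1 hz)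
  -- Weierstrass: a locally uniform limit of holomorphic functions may be differentiated
  -- termwise, so a summable bound on the terms themselves suffices.
  have hsum : HasSum (fun n => deriv (fun w => c n * w ^ n) z) (deriv (ofScalarsSum c) z) := by
    rw [ofScalarsSum_eq_tsum]
    simp only [smul_eq_mul]
    refine Complex.hasSum_deriv_of_summable_norm (U := ball 0 r)
      (by simpa only [ofScalars_norm] using (ofScalars ℂ c).summable_norm_mul_pow hr)
      (fun n => by fun_prop) isOpen_ball (fun n w hw => ?_) ?_
    · rw [norm_mul, norm_pow]
      gcongr
      exact (mem_ball_zero_iff.1 hw).le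
    · rw [mem_ball_zero_iff]
      exact_mod_cast hzr
  have hshift : HasSum (fun n => derivCoeff c n * z ^ n) (deriv (ofScalarsSum c) z) := by
    simpa [derivCoeff, mul_assoc, mul_left_comm] using (hasSum_nat_add_iff' 1).2 hsum
  exact hshift.unique <| hasSum_ofScalars <|
    eball_subset_eball (radius_ofScalars_le_radius_ofScalars_derivCoeff c) hz

theorem iteratedDeriv_two_ofScalarsSum {c : ℕ → ℂ} {z : ℂ}
    (hz : z ∈ eball 0 (ofScalars ℂ c).radius) :
    iteratedDeriv 2 (ofScalarsSum c) z = ofScalarsSum (derivCoeff (derivCoeff c)) z := by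
  have hderiv : deriv (ofScalarsSum c) =ᶠ[𝓝 z] ofScalarsSum (derivCoeff c) :=
    eventually_of_mem (isOpen_eball.mem_nhds hz) fun w hw => deriv_ofScalarsSum hw
  rw [iteratedDeriv_succ, iteratedDeriv_one, hderiv.deriv_eq]
  exact deriv_ofScalarsSum <|
    eball_subset_eball (radius_ofScalars_le_radius_ofScalars_derivCoeff c) hz

theorem ofScalarsSum_hypergeometric_ode {α β γ : ℂ} {c : ℕ → ℂ}
    (hrec : ∀ n : ℕ, (n + 1) * (n + γ) * c (n + 1) = (n + α) * (n + β) * c n)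
    {t : ℂ} (ht : t ∈ eball 0 (ofScalars ℂ c).radius) :
    t * (1 - t) * iteratedDeriv 2 (ofScalarsSum c) t +
        (γ - (α + β + 1) * t) * deriv (ofScalarsSum c) t - α * β * ofScalarsSum c t = 0 := by
  have ht' := eball_subset_eball (radius_ofScalars_le_radius_ofScalars_derivCoeff c) ht
  have ht'' := eball_subset_eball (radius_ofScalars_le_radius_ofScalars_derivCoeff _) ht'
  rw [iteratedDeriv_two_ofScalarsSum ht, deriv_ofScalarsSum ht]
  set y := ofScalarsSum c t
  set y' := ofScalarsSum (derivCoeff c) t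
  set y'' := ofScalarsSum (derivCoeff (derivCoeff c)) t
  have h0 : HasSum (fun n => c n * t ^ n) y := hasSum_ofScalars ht
  have h1 : HasSum (fun n => derivCoeff c n * t ^ n) y' := hasSum_ofScalars ht'
  have h2 : HasSum (fun n => derivCoeff (derivCoeff c) n * t ^ n) y'' := hasSum_ofScalars ht''
  have hlow : HasSum (fun n => (n + 1) * (n + γ) * c (n + 1) * t ^ n) (t * y'' + γ * y') :=
    (h2.natCast_mul_of_derivCoeff.add (h1.mul_left γ)).congr_fun fun n => by
      simp only [derivCoeff, nsmul_eq_mul]; push_cast; ring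
  have hmid : HasSum (fun n => derivCoeff (fun n => (n + α + β) * c n) n * t ^ n)
      (t * y'' + (α + β + 1) * y') :=
    (h2.natCast_mul_of_derivCoeff.add (h1.mul_left (α + β + 1))).congr_fun fun n => by
      simp only [derivCoeff, nsmul_eq_mul]; push_cast; ring
  have hhigh : HasSum (fun n => (n + α) * (n + β) * c n * t ^ n)
      (t * (t * y'' + (α + β + 1) * y') + α * β * y) :=
    (hmid.natCast_mul_of_derivCoeff.add (h0.mul_left (α * β))).congr_fun fun n => by ring
  have hsum_eq := hlow.unique (hhigh.congr_fun fun n => by rw [hrec])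
  linear_combination hsum_eq

theorem ordinaryHypergeometricCoefficient_succ {𝕂 : Type*} [Field 𝕂] [CharZero 𝕂] (a b : 𝕂)
    {c : 𝕂} (hc : ∀ k : ℕ, c ≠ -k) (n : ℕ) :
    (n + 1) * (n + c) * ordinaryHypergeometricCoefficient a b c (n + 1) =
      (n + a) * (n + b) * ordinaryHypergeometricCoefficient a b c n := by
  have hpoch : (ascPochhammer 𝕂 n).eval c ≠ 0 := by
    rw [Ne, ascPochhammer_eval_eq_zero_iff]
    rintro ⟨k, -, hk⟩
    exact hc k (by rw [hk, neg_neg])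
  have hcn : c + n ≠ 0 := fun h => hc n (eq_neg_of_add_eq_zero_left h)
  simp only [ordinaryHypergeometricCoefficient, ascPochhammer_succ_eval, Nat.factorial_succ,
    Nat.cast_mul]
  field_simp
  push_cast
  ring

theorem one_le_radius_ordinaryHypergeometricSeries {𝕂 𝔸 : Type*} [RCLike 𝕂]
    [NormedDivisionRing 𝔸] [NormedAlgebra 𝕂 𝔸] (a b c : 𝕂) :
    1 ≤ (ordinaryHypergeometricSeries 𝔸 a b c).radius := by
  by_cases habc : ∀ k : ℕ, (k : 𝕂) ≠ -a ∧ (k : 𝕂) ≠ -b ∧ (k : 𝕂) ≠ -c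
  · rw [ordinaryHypergeometricSeries_radius_eq_one 𝔸 a b c habc]
  push Not at habc
  obtain ⟨k, hk⟩ := habc
  by_cases ha : (k : 𝕂) = -a
  · rw [show a = -k by rw [ha, neg_neg], ordinaryHypergeometric_radius_top_of_neg_nat₁]
    exact le_top
  by_cases hb : (k : 𝕂) = -b
  · rw [show b = -k by rw [hb, neg_neg], ordinaryHypergeometric_radius_top_of_neg_nat₂]
    exact le_top
  rw [show c = -k by rw [hk ha hb, neg_neg], ordinaryHypergeometric_radius_top_of_neg_nat₃]
  exact le_top

theorem ordinaryHypergeometric_ode (a b : ℂ) {c : ℂ} (hc : ∀ k : ℕ, c ≠ -k) {t : ℂ}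
    (ht : ‖t‖ < 1) :
    t * (1 - t) * iteratedDeriv 2 (₂F₁ a b c) t + (c - (a + b + 1) * t) * deriv (₂F₁ a b c) t -
      a * b * ₂F₁ a b c t = 0 := by
  have ht' : ‖t‖ₑ < 1 := by
    rw [← ENNReal.coe_one, enorm_lt_coe, ← NNReal.coe_lt_coe]
    exact ht
  exact ofScalarsSum_hypergeometric_ode (ordinaryHypergeometricCoefficient_succ a b hc) <|
    mem_eball_zero_iff.2 <| ht'.trans_le <| one_le_radius_ordinaryHypergeometricSeries a b c

theorem ordinaryHypergeometric_apply_eq_tsum {𝕂 : Type*} [Field 𝕂] [TopologicalSpace 𝕂]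
    [IsTopologicalRing 𝕂] (a b c x : 𝕂) :
    ₂F₁ a b c x = ∑' n : ℕ, (ascPochhammer 𝕂 n).eval a * (ascPochhammer 𝕂 n).eval b /
      ((ascPochhammer 𝕂 n).eval c * (n.factorial : 𝕂)) * x ^ n := by
  rw [ordinaryHypergeometric_eq_tsum]
  refine tsum_congr fun n => ?_
  rw [smul_eq_mul, div_eq_mul_inv, mul_inv]
  ring

/-- The hypergeometric series satisfies the hypergeometric differential equation
`t(1-t)y'' + (C - (A+B+1)t)y' - AB·y = 0` on the open unit disc. -/
theorem hypergeometric_ODE (A B C : ℝ) (hC : ∀ n : ℕ, C ≠ -(n : ℝ)) :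
    ∀ t : ℂ, ‖t‖ < 1 →
      t * (1 - t) *
          iteratedDeriv 2
            (fun s : ℂ => ∑' n : ℕ,
              (ascPochhammer ℂ n).eval (A : ℂ) * (ascPochhammer ℂ n).eval (B : ℂ) /
                ((ascPochhammer ℂ n).eval (C : ℂ) * (n.factorial : ℂ)) * s ^ n) t +
        ((C : ℂ) - ((A : ℂ) + (B : ℂ) + 1) * t) *
          deriv
            (fun s : ℂ => ∑' n : ℕ,
              (ascPochhammer ℂ n).eval (A : ℂ) * (ascPochhammer ℂ n).eval (B : ℂ) /
                ((ascPochhammer ℂ n).eval (C : ℂ) * (n.factorial : ℂ)) * s ^ n) t -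
        (A : ℂ) * (B : ℂ) *
          (∑' n : ℕ,
            (ascPochhammer ℂ n).eval (A : ℂ) * (ascPochhammer ℂ n).eval (B : ℂ) /
              ((ascPochhammer ℂ n).eval (C : ℂ) * (n.factorial : ℂ)) * t ^ n) = 0 := by
  intro t ht
  simp only [← ordinaryHypergeometric_apply_eq_tsum]
  exact ordinaryHypergeometric_ode _ _ (fun k h => hC k (by exact_mod_cast h)) ht
end
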